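/- arXiv:2406.02254 — 5 statements merged into one kernel-verified Lean document; each statement's English description precedes it below -/
import Mathlib

section
/- For every l ∈ {1, …, K}, the tail sum of the minimal power coefficients satisfies ∑_{k=l}^{K} \hatα_k = c · ∑_{k=l}^{K} 2^{(k−l)Ω'} A_k. In particular, the total allocated power is ∑_{k=1}^{K} \hatα_k = c · ∑_{k=1}^{K} 2^{(k−1)Ω'} A_k, so the power-budget constraint ∑_{k=1}^{K} \hatα_k ≤ 1 holds if and only if (2^{Ω'} − 1) · ∑_{i=1}^{K} 2^{(i−1)Ω'} A_i ≤ 1 (the feasibility condition of Theorem 1). -/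
lemma noma_tail_key (K : ℕ) (A : ℕ → ℝ) (Ω' c : ℝ)
    (h1c : (1:ℝ) + c = (2:ℝ) ^ Ω')
    (hatα : ℕ → ℝ)
    (hrec : ∀ l ∈ Finset.Icc 1 K,
      hatα l = c * ((∑ k ∈ Finset.Ioc l K, hatα k) + A l)) :
    ∀ d l, 1 ≤ l → l + d = K →
      ∑ k ∈ Finset.Icc l K, hatα k
        = c * ∑ k ∈ Finset.Icc l K, (2 : ℝ) ^ (((k : ℝ) - (l : ℝ)) * Ω') * A k := by
  intro d
  induction d with
  | zero =>
    intro l hl hlK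
    simp only [Nat.add_zero] at hlK
    subst hlK
    rw [Finset.Icc_self, Finset.sum_singleton, Finset.sum_singleton,
      hrec l (Finset.mem_Icc.mpr ⟨hl, le_refl l⟩)]
    simp
  | succ d ih =>
    intro l hl hlK
    have hlK' : l + 1 + d = K := by omega
    have hIH := ih (l+1) (by omega) hlK'
    have hlle : l ≤ K := by omega
    have hIoc : Finset.Ioc l K = Finset.Icc (l+1) K := (Finset.Icc_add_one_left_eq_Ioc l K).symm
    have hsplit : ∀ f : ℕ → ℝ,
        ∑ k ∈ Finset.Icc l K, f k = f l + ∑ k ∈ Finset.Icc (l+1) K, f k := by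
      intro f
      rw [Finset.Icc_eq_cons_Ioc hlle, Finset.sum_cons, hIoc]
    have hα := hrec l (Finset.mem_Icc.mpr ⟨hl, hlle⟩)
    rw [hIoc] at hα
    have hshift : ∑ k ∈ Finset.Icc (l+1) K, (2 : ℝ) ^ (((k : ℝ) - (l : ℝ)) * Ω') * A k
        = (2:ℝ) ^ Ω' * ∑ k ∈ Finset.Icc (l+1) K, (2 : ℝ) ^ (((k : ℝ) - ((l:ℝ)+1)) * Ω') * A k := by
      rw [Finset.mul_sum]
      refine Finset.sum_congr rfl fun k hk => ?_
      rw [← mul_assoc, ← Real.rpow_add (by norm_num : (0:ℝ) < 2)]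
      ring_nf
    rw [hsplit hatα, hsplit (fun k => (2 : ℝ) ^ (((k : ℝ) - (l : ℝ)) * Ω') * A k)]
    simp only [sub_self, zero_mul, Real.rpow_zero, one_mul]
    rw [hshift, hα, hIH]
    push_cast
    rw [← h1c]
    ring

/-- Tail sums of the minimal power coefficients:
`∑_{k=l}^K hatα k = c · ∑_{k=l}^K 2^{(k−l)Ω'} A k` for every `l ∈ {1,…,K}`; in particular
the total allocated power is `c · ∑_{k=1}^K 2^{(k−1)Ω'} A k`, so the power-budget constraint
`∑ hatα ≤ 1` holds iff `(2^{Ω'} − 1) · ∑_{i=1}^K 2^{(i−1)Ω'} A i ≤ 1`. -/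
theorem noma_minimal_allocation_tail_sum_and_feasibility
    (K : ℕ) (hK : 1 ≤ K) (A : ℕ → ℝ)
    (hApos : ∀ l ∈ Finset.Icc 1 K, 0 < A l)
    (hAord : ∀ l ∈ Finset.Icc 1 K, ∀ j ∈ Finset.Icc 1 K, l ≤ j → A j ≤ A l)
    (B Ω Ω' c : ℝ) (hB : 0 < B) (hΩ : 0 < Ω) (hΩ' : Ω' = Ω / B)
    (hc : c = (2 : ℝ) ^ Ω' - 1) (hcpos : 0 < c)
    (hatα : ℕ → ℝ)
    (hrec : ∀ l ∈ Finset.Icc 1 K,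
      hatα l = c * ((∑ k ∈ Finset.Ioc l K, hatα k) + A l)) :
    (∀ l ∈ Finset.Icc 1 K,
      ∑ k ∈ Finset.Icc l K, hatα k
        = c * ∑ k ∈ Finset.Icc l K, (2 : ℝ) ^ (((k : ℝ) - (l : ℝ)) * Ω') * A k) ∧
    (∑ k ∈ Finset.Icc 1 K, hatα k
        = c * ∑ k ∈ Finset.Icc 1 K, (2 : ℝ) ^ (((k : ℝ) - 1) * Ω') * A k) ∧
    ((∑ k ∈ Finset.Icc 1 K, hatα k ≤ 1) ↔
      ((2 : ℝ) ^ Ω' - 1) * ∑ i ∈ Finset.Icc 1 K, (2 : ℝ) ^ (((i : ℝ) - 1) * Ω') * A i ≤ 1) := by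
  have h1c : (1:ℝ) + c = (2:ℝ) ^ Ω' := by rw [hc]; ring
  have key := noma_tail_key K A Ω' c h1c hatα hrec
  have hmain : ∀ l ∈ Finset.Icc 1 K,
      ∑ k ∈ Finset.Icc l K, hatα k
        = c * ∑ k ∈ Finset.Icc l K, (2 : ℝ) ^ (((k : ℝ) - (l : ℝ)) * Ω') * A k := by
    intro l hl
    obtain ⟨h1, h2⟩ := Finset.mem_Icc.mp hl
    exact key (K - l) l h1 (by omega)
  have h1K : (1:ℕ) ∈ Finset.Icc 1 K := Finset.mem_Icc.mpr ⟨le_refl 1, hK⟩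
  have htot := hmain 1 h1K
  simp only [Nat.cast_one] at htot
  refine ⟨hmain, htot, ?_⟩
  rw [htot, hc]
end

section
/- For every l ∈ {1, …, K}, the minimal power coefficient has the closed form \hatα_l = c·A_l + c²·∑_{k=l+1}^{K} 2^{(k−l−1)Ω'} A_k. -/
/-- Closed form of the minimal power coefficients:
`hatα l = c·A l + c² · ∑_{k=l+1}^K 2^{(k−l−1)Ω'} A k` for every `l ∈ {1,…,K}`. -/
theorem noma_minimal_allocation_closed_form
    (K : ℕ) (hK : 1 ≤ K) (A : ℕ → ℝ)
    (hApos : ∀ l ∈ Finset.Icc 1 K, 0 < A l)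
    (hAord : ∀ l ∈ Finset.Icc 1 K, ∀ j ∈ Finset.Icc 1 K, l ≤ j → A j ≤ A l)
    (B Ω Ω' c : ℝ) (hB : 0 < B) (hΩ : 0 < Ω) (hΩ' : Ω' = Ω / B)
    (hc : c = (2 : ℝ) ^ Ω' - 1) (hcpos : 0 < c)
    (hatα : ℕ → ℝ)
    (hrec : ∀ l ∈ Finset.Icc 1 K,
      hatα l = c * ((∑ k ∈ Finset.Ioc l K, hatα k) + A l)) :
    ∀ l ∈ Finset.Icc 1 K,
      hatα l = c * A l
        + c ^ 2 * ∑ k ∈ Finset.Ioc l K, (2 : ℝ) ^ (((k : ℝ) - (l : ℝ) - 1) * Ω') * A k := by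
  have key : ∀ d l, 1 ≤ l → l + d = K →
      hatα l = c * A l
        + c ^ 2 * ∑ k ∈ Finset.Ioc l K, (2 : ℝ) ^ (((k : ℝ) - (l : ℝ) - 1) * Ω') * A k := by
    intro d
    induction d with
    | zero =>
      intro l hl hlK
      have hlK' : l = K := by omega
      subst hlK'
      have h := hrec l (Finset.mem_Icc.mpr ⟨hl, le_refl l⟩)
      simp only [Finset.Ioc_self, Finset.sum_empty, zero_add] at h
      simp only [Finset.Ioc_self, Finset.sum_empty, mul_zero, add_zero]
      exact h
    | succ d ih =>
      intro l hl hlK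
      have hl1K : l + 1 ≤ K := by omega
      have hlK' : l ≤ K := by omega
      have ih' := ih (l + 1) (by omega) (by omega)
      have hrl := hrec l (Finset.mem_Icc.mpr ⟨hl, hlK'⟩)
      have hrl1 := hrec (l + 1) (Finset.mem_Icc.mpr ⟨by omega, hl1K⟩)
      have hset : Finset.Ioc l K = insert (l + 1) (Finset.Ioc (l + 1) K) := by
        rw [← Finset.Icc_add_one_left_eq_Ioc, ← Finset.Ioc_insert_left hl1K]
      have hnot : l + 1 ∉ Finset.Ioc (l + 1) K := by simp
      rw [hset, Finset.sum_insert hnot] at hrl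
      set S' := ∑ k ∈ Finset.Ioc (l + 1) K, hatα k with hS'def
      set T' := ∑ k ∈ Finset.Ioc (l + 1) K,
          (2 : ℝ) ^ (((k : ℝ) - ((l + 1 : ℕ) : ℝ) - 1) * Ω') * A k with hT'def
      -- the target sum splits
      have hT : ∑ k ∈ Finset.Ioc l K, (2 : ℝ) ^ (((k : ℝ) - (l : ℝ) - 1) * Ω') * A k
          = A (l + 1) + (1 + c) * T' := by
        rw [hset, Finset.sum_insert hnot]
        congr 1
        · have h0 : ((((l + 1 : ℕ) : ℝ)) - (l : ℝ) - 1) * Ω' = 0 := by push_cast; ring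
          rw [h0, Real.rpow_zero, one_mul]
        · rw [hT'def, Finset.mul_sum]
          apply Finset.sum_congr rfl
          intro k _
          have he : ((k : ℝ) - (l : ℝ) - 1) * Ω'
              = Ω' + (((k : ℝ) - ((l + 1 : ℕ) : ℝ) - 1) * Ω') := by push_cast; ring
          rw [he, Real.rpow_add (by norm_num : (0:ℝ) < 2)]
          have h2 : (2 : ℝ) ^ Ω' = 1 + c := by rw [hc]; ring
          rw [h2]; ring
      -- relate S' and T'
      have h1 : c * S' = c * (c * T') := by
        linear_combination hrl1.symm.trans ih'
      have hS : S' = c * T' := mul_left_cancel₀ (ne_of_gt hcpos) h1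
      rw [hT, hrl, ih', hS]
      ring
  intro l hl
  rw [Finset.mem_Icc] at hl
  exact key (K - l) l hl.1 (by omega)
end

section
/- The minimal power coefficients respect the NOMA user-ordering constraint: \hatα_1 ≥ \hatα_2 ≥ ⋯ ≥ \hatα_K > 0, i.e., a user with weaker channel (larger A_l) is allocated at least as much power as any user with stronger channel. -/
/-- The minimal power coefficients respect the NOMA user-ordering constraint:
`hatα 1 ≥ hatα 2 ≥ ⋯ ≥ hatα K > 0`, i.e. they are positive and non-increasing in the user
index (a weaker user, with larger `A l`, gets at least as much power). -/
theorem noma_minimal_allocation_ordering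
    (K : ℕ) (hK : 1 ≤ K) (A : ℕ → ℝ)
    (hApos : ∀ l ∈ Finset.Icc 1 K, 0 < A l)
    (hAord : ∀ l ∈ Finset.Icc 1 K, ∀ j ∈ Finset.Icc 1 K, l ≤ j → A j ≤ A l)
    (B Ω Ω' c : ℝ) (hB : 0 < B) (hΩ : 0 < Ω) (hΩ' : Ω' = Ω / B)
    (hc : c = (2 : ℝ) ^ Ω' - 1) (hcpos : 0 < c)
    (hatα : ℕ → ℝ)
    (hrec : ∀ l ∈ Finset.Icc 1 K,
      hatα l = c * ((∑ k ∈ Finset.Ioc l K, hatα k) + A l)) :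
    (∀ l ∈ Finset.Icc 1 K, ∀ j ∈ Finset.Icc 1 K, l ≤ j → hatα j ≤ hatα l) ∧
    (∀ l ∈ Finset.Icc 1 K, 0 < hatα l) := by
  have key : ∀ n : ℕ, ∀ l, 1 ≤ l → l ≤ K → K - l ≤ n → 0 < hatα l := by
    intro n
    induction n with
    | zero =>
      intro l h1 h2 h3
      have hlK : l = K := by omega
      rw [hrec l (Finset.mem_Icc.mpr ⟨h1, h2⟩)]
      have : Finset.Ioc l K = ∅ := by rw [hlK]; simp
      rw [this]
      simpa using mul_pos hcpos (hApos l (Finset.mem_Icc.mpr ⟨h1, h2⟩))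
    | succ n ih =>
      intro l h1 h2 h3
      rw [hrec l (Finset.mem_Icc.mpr ⟨h1, h2⟩)]
      apply mul_pos hcpos
      have hsum : 0 ≤ ∑ k ∈ Finset.Ioc l K, hatα k :=
        Finset.sum_nonneg (fun k hk => by
          obtain ⟨hk1, hk2⟩ := Finset.mem_Ioc.mp hk
          exact (ih k (by omega) hk2 (by omega)).le)
      have hA := hApos l (Finset.mem_Icc.mpr ⟨h1, h2⟩)
      linarith
  have hpos : ∀ l ∈ Finset.Icc 1 K, 0 < hatα l := by
    intro l hl
    obtain ⟨h1, h2⟩ := Finset.mem_Icc.mp hl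
    exact key (K - l) l h1 h2 le_rfl
  have hadj : ∀ l, 1 ≤ l → l + 1 ≤ K → hatα (l + 1) ≤ hatα l := by
    intro l h1 h2
    have e1 := hrec l (Finset.mem_Icc.mpr ⟨h1, by omega⟩)
    have e2 := hrec (l + 1) (Finset.mem_Icc.mpr ⟨by omega, h2⟩)
    have hset : Finset.Ioc l K = insert (l + 1) (Finset.Ioc (l + 1) K) := by
      rw [Finset.Ioc_insert_left (by omega : l + 1 ≤ K), ← Finset.Icc_add_one_left_eq_Ioc]
    rw [hset, Finset.sum_insert (by simp)] at e1
    have hp := hpos (l + 1) (Finset.mem_Icc.mpr ⟨by omega, h2⟩)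
    have hAle : A (l + 1) ≤ A l :=
      hAord l (Finset.mem_Icc.mpr ⟨h1, by omega⟩)
        (l + 1) (Finset.mem_Icc.mpr ⟨by omega, h2⟩) (by omega)
    have h3 : 0 < c * hatα (l + 1) := mul_pos hcpos hp
    have h4 : 0 ≤ c * (A l - A (l + 1)) := mul_nonneg hcpos.le (by linarith)
    nlinarith
  have hmono : ∀ l, 1 ≤ l → ∀ j, l ≤ j → j ≤ K → hatα j ≤ hatα l := by
    intro l hl1 j hlj
    induction j, hlj using Nat.le_induction with
    | base => intro _; exact le_rfl
    | succ j hlj ih =>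
      intro hjK
      exact (hadj j (by omega) hjK).trans (ih (by omega))
  refine ⟨fun l hl j hj hlj => ?_, hpos⟩
  obtain ⟨h1, _⟩ := Finset.mem_Icc.mp hl
  obtain ⟨_, h2⟩ := Finset.mem_Icc.mp hj
  exact hmono l h1 j hlj h2
end

section
/- (Theorem 1, exact form) Suppose α_1, …, α_K ≥ 0 satisfy the full-power condition ∑_{l=1}^{K} α_l = 1 and the binding QoS conditions α_l = c(∑_{k=l+1}^{K} α_k + A_l) for every l < K (so each of the K−1 weakest users achieves rate exactly Ω). Then the power of the strongest user is α_K = 2^{−(K−1)Ω'} (1 − c ∑_{l=1}^{K−1} 2^{(l−1)Ω'} A_l), and the achieved sum rate ∑_{l=1}^{K} B·log₂(1 + γ_l) equals (K−1)Ω + B·log₂(1 + α_K / A_K). -/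
/-- Theorem 1, exact form: If `α₁,…,α_K ≥ 0` use the full power budget
(`∑ α l = 1`) and the QoS constraints are binding for every `l < K`
(`α l = c(∑_{k=l+1}^K α k + A l)`, i.e. each of the `K−1` weakest users achieves rate
exactly `Ω`), then the strongest user gets
`α K = 2^{−(K−1)Ω'}(1 − c ∑_{l=1}^{K−1} 2^{(l−1)Ω'} A l)` and the sum rate equals
`(K−1)Ω + B·log₂(1 + α K / A K)`. -/
theorem noma_theorem_one_exact_form
    (K : ℕ) (hK : 1 ≤ K) (A : ℕ → ℝ)
    (hApos : ∀ l ∈ Finset.Icc 1 K, 0 < A l)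
    (hAord : ∀ l ∈ Finset.Icc 1 K, ∀ j ∈ Finset.Icc 1 K, l ≤ j → A j ≤ A l)
    (B Ω Ω' c : ℝ) (hB : 0 < B) (hΩ : 0 < Ω) (hΩ' : Ω' = Ω / B)
    (hc : c = (2 : ℝ) ^ Ω' - 1) (hcpos : 0 < c)
    (α : ℕ → ℝ)
    (hαnonneg : ∀ l ∈ Finset.Icc 1 K, 0 ≤ α l)
    (hfull : ∑ l ∈ Finset.Icc 1 K, α l = 1)
    (hbind : ∀ l ∈ Finset.Icc 1 K, l < K →
      α l = c * ((∑ k ∈ Finset.Ioc l K, α k) + A l)) :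
    α K = (2 : ℝ) ^ (-(((K : ℝ) - 1) * Ω'))
        * (1 - c * ∑ l ∈ Finset.Icc 1 (K - 1), (2 : ℝ) ^ (((l : ℝ) - 1) * Ω') * A l) ∧
    ∑ l ∈ Finset.Icc 1 K,
        B * Real.logb 2 (1 + α l / ((∑ k ∈ Finset.Ioc l K, α k) + A l))
      = ((K : ℝ) - 1) * Ω + B * Real.logb 2 (1 + α K / A K) := by
  set q : ℝ := (2 : ℝ) ^ Ω' with hq
  have hqpos : 0 < q := Real.rpow_pos_of_pos (by norm_num) _
  have hq1c : q = 1 + c := by rw [hc]; ring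
  -- key recursion
  have key : ∀ d, d ≤ K - 1 →
      ∑ l ∈ Finset.Icc (K - d) K, α l
        = q ^ d * α K
          + c * ∑ l ∈ Finset.Icc (K - d) (K - 1), q ^ (l - (K - d)) * A l := by
    intro d hd
    induction d with
    | zero =>
      have : Finset.Icc K (K - 1) = ∅ := Finset.Icc_eq_empty_of_lt (Nat.sub_lt hK one_pos)
      simp [this]
    | succ d ih =>
      have hd' : d ≤ K - 1 := Nat.le_of_succ_le hd
      have ih := ih hd'
      set m := K - (d + 1) with hm
      have hm1 : 1 ≤ m := by omega
      have hmK : m < K := by omega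
      have hms : m + 1 = K - d := by omega
      have hmem : m ∈ Finset.Icc 1 K := Finset.mem_Icc.mpr ⟨hm1, le_of_lt hmK⟩
      have hIoc : Finset.Ioc m K = Finset.Icc (K - d) K := by
        rw [← hms, Finset.Icc_add_one_left_eq_Ioc]
      have hαm := hbind m hmem hmK
      have hsplit : ∑ l ∈ Finset.Icc m K, α l = α m + ∑ l ∈ Finset.Icc (K - d) K, α l := by
        rw [← hIoc, ← Finset.Ioc_insert_left (le_of_lt hmK),
          Finset.sum_insert (by simp)]
      have hIoc2 : Finset.Ioc m (K - 1) = Finset.Icc (K - d) (K - 1) := by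
        rw [← hms, Finset.Icc_add_one_left_eq_Ioc]
      have hmK1 : m ≤ K - 1 := by omega
      have hsplitR : ∑ l ∈ Finset.Icc m (K - 1), q ^ (l - m) * A l
          = A m + q * ∑ l ∈ Finset.Icc (K - d) (K - 1), q ^ (l - (K - d)) * A l := by
        rw [← Finset.Ioc_insert_left hmK1, Finset.sum_insert (by simp), hIoc2]
        simp only [Nat.sub_self, pow_zero, one_mul]
        rw [Finset.mul_sum]
        congr 1
        refine Finset.sum_congr rfl fun l hl => ?_
        have hl' : K - d ≤ l := (Finset.mem_Icc.mp hl).1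
        have : l - m = (l - (K - d)) + 1 := by omega
        rw [this, pow_succ]
        ring
      rw [hsplit]
      rw [hαm, hIoc, ih] at *
      rw [hsplitR]
      rw [hq1c]
      ring
  have hkey := key (K - 1) le_rfl
  have hKK : K - (K - 1) = 1 := by omega
  rw [hKK, hfull] at hkey
  -- sum with rpow exponents equals sum with natural powers
  have hSeq : ∑ l ∈ Finset.Icc 1 (K - 1), (2 : ℝ) ^ (((l : ℝ) - 1) * Ω') * A l
      = ∑ l ∈ Finset.Icc 1 (K - 1), q ^ (l - 1) * A l := by
    refine Finset.sum_congr rfl fun l hl => ?_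
    have hl1 : 1 ≤ l := (Finset.mem_Icc.mp hl).1
    have : ((l : ℝ) - 1) = ((l - 1 : ℕ) : ℝ) := by
      push_cast [Nat.cast_sub hl1]; ring
    rw [this, mul_comm ((l - 1 : ℕ) : ℝ) Ω', Real.rpow_mul (by norm_num),
      Real.rpow_natCast]
  constructor
  · have hpow : (2 : ℝ) ^ (-(((K : ℝ) - 1) * Ω')) = (q ^ (K - 1))⁻¹ := by
      have : ((K : ℝ) - 1) = ((K - 1 : ℕ) : ℝ) := by
        push_cast [Nat.cast_sub hK]; ring
      rw [this, Real.rpow_neg (by norm_num), mul_comm ((K - 1 : ℕ) : ℝ) Ω',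
        Real.rpow_mul (by norm_num), Real.rpow_natCast]
    rw [hpow, hSeq]
    have hne : q ^ (K - 1) ≠ 0 := by positivity
    field_simp
    linarith [hkey]
  · -- sum-rate part
    have hterm : ∀ l ∈ Finset.Icc 1 K, l < K →
        B * Real.logb 2 (1 + α l / ((∑ k ∈ Finset.Ioc l K, α k) + A l)) = Ω := by
      intro l hl hlK
      have hl1 : 1 ≤ l := (Finset.mem_Icc.mp hl).1
      have hTnn : 0 ≤ ∑ k ∈ Finset.Ioc l K, α k := by
        refine Finset.sum_nonneg fun k hk => ?_
        have hk' := Finset.mem_Ioc.mp hk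
        exact hαnonneg k (Finset.mem_Icc.mpr ⟨by omega, hk'.2⟩)
      have hden : 0 < (∑ k ∈ Finset.Ioc l K, α k) + A l :=
        add_pos_of_nonneg_of_pos hTnn (hApos l hl)
      have : α l / ((∑ k ∈ Finset.Ioc l K, α k) + A l) = c := by
        rw [hbind l hl hlK]; field_simp
      rw [this]
      have : (1 : ℝ) + c = (2 : ℝ) ^ Ω' := by rw [hc]; ring
      rw [this, Real.logb_rpow (by norm_num) (by norm_num), hΩ']
      field_simp
    have hKsucc : K = (K - 1) + 1 := by omega
    have hsplit :
        ∑ l ∈ Finset.Icc 1 K,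
            B * Real.logb 2 (1 + α l / ((∑ k ∈ Finset.Ioc l K, α k) + A l))
          = (∑ l ∈ Finset.Icc 1 (K - 1),
              B * Real.logb 2 (1 + α l / ((∑ k ∈ Finset.Ioc l K, α k) + A l)))
            + B * Real.logb 2 (1 + α K / ((∑ k ∈ Finset.Ioc K K, α k) + A K)) := by
      conv_lhs => rw [hKsucc]
      rw [Finset.sum_Icc_succ_top (by omega)]
      rw [← hKsucc]
    rw [hsplit]
    have hlast : (∑ k ∈ Finset.Ioc K K, α k) + A K = A K := by simp
    rw [hlast]
    have hconst : ∑ l ∈ Finset.Icc 1 (K - 1),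
        B * Real.logb 2 (1 + α l / ((∑ k ∈ Finset.Ioc l K, α k) + A l))
        = ((K : ℝ) - 1) * Ω := by
      rw [Finset.sum_congr rfl fun l hl => hterm l
        (Finset.mem_Icc.mpr ⟨(Finset.mem_Icc.mp hl).1, by
          have := (Finset.mem_Icc.mp hl).2; omega⟩)
        (by have := (Finset.mem_Icc.mp hl).2; omega)]
      rw [Finset.sum_const, Nat.card_Icc]
      have : ((K - 1 + 1 - 1 : ℕ) : ℝ) = (K : ℝ) - 1 := by
        push_cast [Nat.cast_sub hK]; ring
      rw [nsmul_eq_mul, this]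
    rw [hconst]
end

section
/- For every K_s ≥ 0, the Rician density integrates to one: ∫₀^∞ x·exp(−(x² + 2K_s)/2)·I₀(√(2K_s)·x) dx = 1. -/
open MeasureTheory Real Set

/-- The zeroth-order modified Bessel function of the first kind,
`I₀(z) = (1/π) ∫₀^π e^{z cos t} dt`. -/
noncomputable def besselI0 (z : ℝ) : ℝ :=
  (1 / Real.pi) * ∫ t in (0 : ℝ)..Real.pi, Real.exp (z * Real.cos t)

lemma besselI0_interval (z : ℝ) :
    ∫ t in (-Real.pi)..Real.pi, Real.exp (z * Real.cos t) = 2 * Real.pi * besselI0 z := by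
  have h1 : ∫ t in (-Real.pi)..(0:ℝ), Real.exp (z * Real.cos t)
      = ∫ t in (0:ℝ)..Real.pi, Real.exp (z * Real.cos t) := by
    have := intervalIntegral.integral_comp_neg (a := (0:ℝ)) (b := Real.pi)
      (fun t => Real.exp (z * Real.cos t))
    simp only [Real.cos_neg, neg_zero] at this
    rw [← this]
  have hc : ∀ a b : ℝ, IntervalIntegrable (fun t => Real.exp (z * Real.cos t)) volume a b :=
    fun a b => (Real.continuous_exp.comp (continuous_const.mul Real.continuous_cos)).intervalIntegrable a b
  rw [← intervalIntegral.integral_add_adjacent_intervals (a := -Real.pi) (b := 0)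
    (c := Real.pi) (hc _ _) (hc _ _), h1]
  unfold besselI0
  have hπ : Real.pi ≠ 0 := Real.pi_ne_zero
  field_simp
  ring

/-- For every `K_s ≥ 0`, the standardized Rician density integrates to one:
`∫₀^∞ x·e^{−(x²+2K_s)/2}·I₀(√(2K_s)x) dx = 1`. -/
theorem rician_density_integrates_to_one (Ks : ℝ) (hKs : 0 ≤ Ks) :
    ∫ x in Set.Ioi (0 : ℝ),
        x * Real.exp (-(x ^ 2 + 2 * Ks) / 2) * besselI0 (Real.sqrt (2 * Ks) * x) = 1 := by
  set b := Real.sqrt (2 * Ks) with hbdef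
  have hb0 : 0 ≤ b := Real.sqrt_nonneg _
  have hb2 : b ^ 2 = 2 * Ks := Real.sq_sqrt (by linarith)
  set G : ℝ × ℝ → ℝ := fun p => Real.exp (-(((p.1 - b) ^ 2 + p.2 ^ 2) / 2)) with hGdef
  -- Integrability of the 2D Gaussian
  have h1 : Integrable (fun x : ℝ => Real.exp (-(1/2) * x ^ 2)) :=
    integrable_exp_neg_mul_sq (by norm_num)
  have h1' : Integrable (fun x : ℝ => Real.exp (-(1/2) * (x - b) ^ 2)) :=
    h1.comp_sub_right b
  have hGint : Integrable G := by
    have h := h1'.mul_prod h1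
    rw [← Measure.volume_eq_prod] at h
    refine h.congr (Filter.Eventually.of_forall fun p => ?_)
    show Real.exp _ * Real.exp _ = G p
    rw [← Real.exp_add, hGdef]
    congr 1
    ring
  -- value of the 2D Gaussian integral
  have hGval : ∫ p : ℝ × ℝ, G p = 2 * Real.pi := by
    have hGeq : G = fun p : ℝ × ℝ =>
        Real.exp (-(1/2) * (p.1 - b) ^ 2) * Real.exp (-(1/2) * p.2 ^ 2) := by
      funext p
      simp only [hGdef, ← Real.exp_add]
      congr 1
      ring
    have hprod : (∫ x : ℝ, Real.exp (-(1/2) * (x - b) ^ 2)) *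
        (∫ y : ℝ, Real.exp (-(1/2) * y ^ 2)) = 2 * Real.pi := by
      rw [integral_sub_right_eq_self (μ := volume) (fun x => Real.exp (-(1/2) * x ^ 2)) b]
      rw [integral_gaussian]
      rw [Real.mul_self_sqrt (by positivity)]
      rw [div_div_eq_mul_div]
      norm_num
      ring
    rw [hGeq, Measure.volume_eq_prod]
    exact (integral_prod_mul (fun x : ℝ => Real.exp (-(1/2) * (x - b) ^ 2))
      (fun y : ℝ => Real.exp (-(1/2) * y ^ 2))).trans hprod
  -- polar coordinates
  set g : ℝ × ℝ → ℝ := fun p =>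
    p.1 * Real.exp (-((p.1 ^ 2 + b ^ 2 - 2 * b * p.1 * Real.cos p.2) / 2)) with hgdef
  have hGg : ∀ p ∈ polarCoord.target, p.1 • G (polarCoord.symm p) = g p := by
    intro p hp
    have h := Real.sin_sq_add_cos_sq p.2
    simp only [hGdef, hgdef, polarCoord_symm_apply, smul_eq_mul]
    rw [show -(((p.1 * Real.cos p.2 - b) ^ 2 + (p.1 * Real.sin p.2) ^ 2) / 2)
        = -((p.1 ^ 2 + b ^ 2 - 2 * b * p.1 * Real.cos p.2) / 2) from by
      linear_combination (-(p.1 ^ 2) / 2) * h]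
  have hpolar : ∫ p in polarCoord.target, g p = 2 * Real.pi := by
    rw [← hGval, ← integral_comp_polarCoord_symm G]
    exact setIntegral_congr_fun polarCoord.open_target.measurableSet fun p hp => (hGg p hp).symm
  -- integrability on polar target
  have hInt : IntegrableOn g polarCoord.target := by
    have hder : ∀ p ∈ polarCoord.target,
        HasFDerivWithinAt polarCoord.symm
          (LinearMap.toContinuousLinearMap (Matrix.toLin (Module.Basis.finTwoProd ℝ)
            (Module.Basis.finTwoProd ℝ)
            !![Real.cos p.2, -p.1 * Real.sin p.2; Real.sin p.2, p.1 * Real.cos p.2]))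
          polarCoord.target p :=
      fun p _ => (hasFDerivAt_polarCoord_symm p).hasFDerivWithinAt
    have hinj : Set.InjOn polarCoord.symm polarCoord.target := polarCoord.symm.injOn
    have himg : polarCoord.symm '' polarCoord.target = polarCoord.source := by
      rw [← polarCoord.symm_image_target_eq_source]
    have hiff := integrableOn_image_iff_integrableOn_abs_det_fderiv_smul volume
      polarCoord.open_target.measurableSet hder hinj G
    rw [himg] at hiff
    have hsrc : IntegrableOn G polarCoord.source := hGint.integrableOn
    have h2 := hiff.mp hsrc
    refine (h2.congr_fun ?_ polarCoord.open_target.measurableSet)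
    intro p hp
    have hdet : (LinearMap.toContinuousLinearMap (Matrix.toLin (Module.Basis.finTwoProd ℝ)
        (Module.Basis.finTwoProd ℝ)
        !![Real.cos p.2, -p.1 * Real.sin p.2; Real.sin p.2, p.1 * Real.cos p.2])).det = p.1 := by
      conv_rhs => rw [← one_mul p.1, ← Real.cos_sq_add_sin_sq p.2]
      simp only [neg_mul, LinearMap.det_toContinuousLinearMap, LinearMap.det_toLin,
        Matrix.det_fin_two_of, sub_neg_eq_add]
      ring
    have hp1 : 0 < p.1 := hp.1
    simp only [hdet]
    rw [abs_of_pos hp1]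
    exact hGg p hp
  -- Fubini
  have htarget : polarCoord.target = Set.Ioi (0:ℝ) ×ˢ Set.Ioo (-Real.pi) Real.pi := rfl
  have hfub : ∫ x in Set.Ioi (0:ℝ), ∫ θ in Set.Ioo (-Real.pi) Real.pi, g (x, θ)
      = 2 * Real.pi := by
    rw [← hpolar, htarget]
    rw [show (volume : Measure (ℝ × ℝ)) = (volume : Measure ℝ).prod volume from Measure.volume_eq_prod ℝ ℝ]
    exact (setIntegral_prod g (by rwa [← Measure.volume_eq_prod, ← htarget])).symm
  -- compute the inner integral
  have hinner : ∀ x : ℝ, ∫ θ in Set.Ioo (-Real.pi) Real.pi, g (x, θ)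
      = 2 * Real.pi * (x * Real.exp (-(x ^ 2 + 2 * Ks) / 2) * besselI0 (b * x)) := by
    intro x
    have : ∀ θ : ℝ, g (x, θ)
        = (x * Real.exp (-(x ^ 2 + 2 * Ks) / 2)) * Real.exp ((b * x) * Real.cos θ) := by
      intro θ
      simp only [hgdef]
      conv_rhs => rw [mul_assoc, ← Real.exp_add]
      congr 2
      linear_combination (-(1:ℝ)/2) * hb2
    simp only [this]
    rw [MeasureTheory.integral_const_mul]
    rw [← MeasureTheory.integral_Ioc_eq_integral_Ioo,
      ← intervalIntegral.integral_of_le (by linarith [Real.pi_pos] : -Real.pi ≤ Real.pi)]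
    rw [besselI0_interval (b * x)]
    ring
  simp only [hinner] at hfub
  rw [MeasureTheory.integral_const_mul] at hfub
  have h2π : (2 * Real.pi) ≠ 0 := by positivity
  have := mul_left_cancel₀ h2π (hfub.trans (mul_one (2 * Real.pi)).symm)
  simpa [hbdef] using this
end
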